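/- arXiv:2202.06317 — 8 statements merged into one kernel-verified Lean document; each statement's English description precedes it below -/
import Mathlib

section
/- Suppose the No Direct Effect assumption holds: there is a function q̄ : X × E → ℝ with q(x,a,e) = q̄(x,e) for all x ∈ X, a ∈ A, e ∈ E. Then the policy value satisfies V(π) = ∑_{x∈X} p(x) ∑_{e∈E} p(e|x,π) · q̄(x,e). -/
open Finset

/-- Marginal embedding distribution `p(e|x,π')` of a policy `π'`. -/
noncomputable def pE {X A E : Type*} [Fintype A]
    (π' : X → A → ℝ) (φ : X → A → E → ℝ) (x : X) (e : E) : ℝ :=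
  ∑ a, π' x a * φ x a e

/-- Policy value `V(π)`. -/
noncomputable def Vval {X A E : Type*} [Fintype X] [Fintype A] [Fintype E]
    (p : X → ℝ) (πt : X → A → ℝ) (φ : X → A → E → ℝ) (q : X → A → E → ℝ) : ℝ :=
  ∑ x, ∑ a, ∑ e, p x * πt x a * φ x a e * q x a e

theorem sum_pE_mul {X A E : Type*} [Fintype A] [Fintype E]
    (π' : X → A → ℝ) (φ : X → A → E → ℝ) (x : X) (g : E → ℝ) :
    ∑ e, pE π' φ x e * g e = ∑ a, ∑ e, π' x a * φ x a e * g e := by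
  simp only [pE, sum_mul]
  exact sum_comm

theorem identification_no_direct_effect_general
    {X A E : Type*} [Fintype X] [Fintype A] [Fintype E]
    (p : X → ℝ) (πt : X → A → ℝ) (φ : X → A → E → ℝ)
    (q : X → A → E → ℝ) (qbar : X → E → ℝ)
    (hnde : ∀ x a e, q x a e = qbar x e) :
    Vval p πt φ q = ∑ x, p x * ∑ e, pE πt φ x e * qbar x e := by
  obtain rfl : q = fun x _ e => qbar x e := funext₃ hnde
  refine sum_congr rfl fun x _ => ?_
  simp only [sum_pE_mul, mul_sum, mul_assoc]

/-- Proposition 1 (identification): under No Direct Effect, the policy value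
equals the expectation of `q̄(x,e)` under the marginal embedding distribution. -/
theorem identification_no_direct_effect
    {X A E : Type*} [Fintype X] [Fintype A] [Fintype E]
    (p : X → ℝ) (πt π₀ : X → A → ℝ) (φ : X → A → E → ℝ)
    (q : X → A → E → ℝ) (qbar : X → E → ℝ)
    (hp : ∀ x, 0 ≤ p x) (hp1 : ∑ x, p x = 1)
    (hπt : ∀ x a, 0 ≤ πt x a) (hπt1 : ∀ x, ∑ a, πt x a = 1)
    (hπ₀ : ∀ x a, 0 ≤ π₀ x a) (hπ₀1 : ∀ x, ∑ a, π₀ x a = 1)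
    (hφ : ∀ x a e, 0 ≤ φ x a e) (hφ1 : ∀ x a, ∑ e, φ x a e = 1)
    (hnde : ∀ x a e, q x a e = qbar x e) :
    Vval p πt φ q = ∑ x, p x * ∑ e, pE πt φ x e * qbar x e :=
  identification_no_direct_effect_general p πt φ q qbar hnde
end

section
/- Suppose (i) common embedding support: for all x ∈ X and e ∈ E, p(e|x,π) > 0 implies p(e|x,π₀) > 0, and (ii) No Direct Effect: q(x,a,e) = q̄(x,e) for all a. Then the MIPS estimator is unbiased: E₀[w(x,e)·q(x,a,e)] = V(π), i.e., ∑_{x,a,e} p(x)·π₀(a|x)·φ(e|x,a)·w(x,e)·q̄(x,e) = V(π), where division by zero is interpreted by the convention c/0 = 0. -/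
open Finset

/-- Marginal importance weight `w(x,e) = p(e|x,π)/p(e|x,π₀)` (with `c/0 = 0`). -/
noncomputable def wE {X A E : Type*} [Fintype A]
    (πt π₀ : X → A → ℝ) (φ : X → A → E → ℝ) (x : X) (e : E) : ℝ :=
  pE πt φ x e / pE π₀ φ x e

/-- Expectation under the logging process. -/
noncomputable def E₀ {X A E : Type*} [Fintype X] [Fintype A] [Fintype E]
    (p : X → ℝ) (π₀ : X → A → ℝ) (φ : X → A → E → ℝ) (f : X → A → E → ℝ) : ℝ :=
  ∑ x, ∑ a, ∑ e, p x * π₀ x a * φ x a e * f x a e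

/-! When the reward does not depend on the action, an expectation over `(a, e)` only sees the
marginal embedding distribution `p(e|x,π')`. The weight `w` turns `p(e|x,π₀)` into `p(e|x,π)`
wherever `p(e|x,π₀) ≠ 0`; where it vanishes, common support and nonnegativity force
`p(e|x,π) = 0` as well, so the convention `c/0 = 0` loses nothing. -/

section Marginalization

variable {X A E : Type*} [Fintype A]

lemma pE_nonneg {π' : X → A → ℝ} {φ : X → A → E → ℝ} (hπ' : ∀ x a, 0 ≤ π' x a)
    (hφ : ∀ x a e, 0 ≤ φ x a e) (x : X) (e : E) : 0 ≤ pE π' φ x e :=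
  sum_nonneg fun a _ => mul_nonneg (hπ' x a) (hφ x a e)

lemma Vval_eq_E₀ [Fintype X] [Fintype E]
    (p : X → ℝ) (π' : X → A → ℝ) (φ : X → A → E → ℝ) (q : X → A → E → ℝ) :
    Vval p π' φ q = E₀ p π' φ q :=
  rfl

lemma E₀_eq_sum_pE [Fintype X] [Fintype E]
    (p : X → ℝ) (π' : X → A → ℝ) (φ : X → A → E → ℝ) (g : X → E → ℝ) :
    E₀ p π' φ (fun x _ e => g x e) = ∑ x, p x * ∑ e, pE π' φ x e * g x e := by
  refine sum_congr rfl fun x _ => ?_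
  rw [sum_comm, mul_sum]
  refine sum_congr rfl fun e _ => ?_
  rw [pE, sum_mul, mul_sum]
  exact sum_congr rfl fun a _ => by ring

lemma pE_mul_wE {πt π₀ : X → A → ℝ} {φ : X → A → E → ℝ} {x : X} {e : E}
    (h : pE π₀ φ x e = 0 → pE πt φ x e = 0) :
    pE π₀ φ x e * wE πt π₀ φ x e = pE πt φ x e :=
  mul_div_cancel_of_imp' h

end Marginalization

theorem mips_unbiased_general
    {X A E : Type*} [Fintype X] [Fintype A] [Fintype E]
    (p : X → ℝ) (πt π₀ : X → A → ℝ) (φ : X → A → E → ℝ)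
    (q : X → A → E → ℝ) (qbar : X → E → ℝ)
    (hπt : ∀ x a, 0 ≤ πt x a)
    (hφ : ∀ x a e, 0 ≤ φ x a e)
    (hsupp : ∀ x e, 0 < pE πt φ x e → 0 < pE π₀ φ x e)
    (hnde : ∀ x a e, q x a e = qbar x e) :
    E₀ p π₀ φ (fun x _ e => wE πt π₀ φ x e * qbar x e) = Vval p πt φ q := by
  have hq : q = fun x _ e => qbar x e := funext fun x => funext fun a => funext (hnde x a)
  have hcancel (x : X) (e : E) : pE π₀ φ x e * wE πt π₀ φ x e = pE πt φ x e := by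
    refine pE_mul_wE fun h0 => ?_
    by_contra hne
    exact (hsupp x e ((pE_nonneg hπt hφ x e).lt_of_ne' hne)).ne' h0
  rw [Vval_eq_E₀, hq, E₀_eq_sum_pE, E₀_eq_sum_pE]
  simp only [← mul_assoc, hcancel]

/-- Proposition 2 (unbiasedness of MIPS): under common embedding support and
No Direct Effect, the MIPS estimator is unbiased. -/
theorem mips_unbiased
    {X A E : Type*} [Fintype X] [Fintype A] [Fintype E]
    (p : X → ℝ) (πt π₀ : X → A → ℝ) (φ : X → A → E → ℝ)
    (q : X → A → E → ℝ) (qbar : X → E → ℝ)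
    (hp : ∀ x, 0 ≤ p x) (hp1 : ∑ x, p x = 1)
    (hπt : ∀ x a, 0 ≤ πt x a) (hπt1 : ∀ x, ∑ a, πt x a = 1)
    (hπ₀ : ∀ x a, 0 ≤ π₀ x a) (hπ₀1 : ∀ x, ∑ a, π₀ x a = 1)
    (hφ : ∀ x a e, 0 ≤ φ x a e) (hφ1 : ∀ x a, ∑ e, φ x a e = 1)
    (hsupp : ∀ x e, 0 < pE πt φ x e → 0 < pE π₀ φ x e)
    (hnde : ∀ x a e, q x a e = qbar x e) :
    E₀ p π₀ φ (fun x _ e => wE πt π₀ φ x e * qbar x e) = Vval p πt φ q :=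
  mips_unbiased_general p πt π₀ φ q qbar hπt hφ hsupp hnde
end

section
/- Suppose A is linearly ordered and the logging policy has universal support: π₀(a|x) > 0 for all x ∈ X and a ∈ A. Then the bias of MIPS, defined as Bias := E₀[w(x,e)·q(x,a,e)] − V(π), satisfies Bias = ∑_{x∈X} p(x) ∑_{e∈E} p(e|x,π₀) ∑_{a<b} π₀(a|x,e)·π₀(b|x,e)·(q(x,a,e) − q(x,b,e))·(w(x,b) − w(x,a)), where the inner sum ranges over pairs of actions a < b. -/
open Finset

/-- Vanilla importance weight `w(x,a) = π(a|x)/π₀(a|x)`. -/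
noncomputable def wA {X A : Type*} (πt π₀ : X → A → ℝ) (x : X) (a : A) : ℝ :=
  πt x a / π₀ x a

/-- Conditional action distribution `π₀(a|x,e)` (with `c/0 = 0`). -/
noncomputable def condπ₀ {X A E : Type*} [Fintype A]
    (π₀ : X → A → ℝ) (φ : X → A → E → ℝ) (x : X) (a : A) (e : E) : ℝ :=
  π₀ x a * φ x a e / pE π₀ φ x e

/-- Symmetrization: the sum over pairs `a < b` of a symmetric function vanishing on the
diagonal is half the full double sum. -/
lemma sym_half {A : Type*} [Fintype A] [LinearOrder A] (F : A → A → ℝ)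
    (hsymm : ∀ a b, F a b = F b a) (hdiag : ∀ a, F a a = 0) :
    ∑ a, ∑ b, (if a < b then F a b else 0) = (1/2) * ∑ a, ∑ b, F a b := by
  have h : ∀ a b : A, F a b
      = (if a < b then F a b else 0) + (if b < a then F a b else 0) := by
    intro a b
    rcases lt_trichotomy a b with h | h | h
    · simp [h, asymm h]
    · subst h; simp [hdiag, lt_irrefl]
    · simp [h, asymm h, not_lt_of_gt h]
  have hswap : ∑ a, ∑ b, (if b < a then F a b else 0)
      = ∑ a, ∑ b, (if a < b then F a b else 0) := by
    rw [Finset.sum_comm]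
    exact Finset.sum_congr rfl fun a _ => Finset.sum_congr rfl fun b _ => by rw [hsymm]
  have htot : ∑ a, ∑ b, F a b
      = ∑ a, ∑ b, (if a < b then F a b else 0)
        + ∑ a, ∑ b, (if b < a then F a b else 0) := by
    rw [← Finset.sum_add_distrib]
    refine Finset.sum_congr rfl fun a _ => ?_
    rw [← Finset.sum_add_distrib]
    exact Finset.sum_congr rfl fun b _ => h a b
  rw [htot, hswap]; ring

/-- Expansion of the symmetric double sum. -/
lemma expand_sum {A : Type*} [Fintype A] (u w q : A → ℝ) :
    ∑ a, ∑ b, (u a * u b * (q a - q b) * (w b - w a))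
    = 2 * ((∑ a, u a * q a) * (∑ a, u a * w a)
        - (∑ a, u a) * (∑ a, u a * (w a * q a))) := by
  have h : ∀ a b : A, u a * u b * (q a - q b) * (w b - w a)
      = (u a * q a) * (u b * w b) + (u a * w a) * (u b * q b)
        - u a * (u b * (w b * q b)) - (u a * (w a * q a)) * u b := by
    intro a b; ring
  simp_rw [h]
  simp_rw [Finset.sum_sub_distrib, Finset.sum_add_distrib, ← Finset.mul_sum,
    ← Finset.sum_mul]
  ring

/-- The key per-(context, embedding) algebraic identity. -/
lemma key_identity {A : Type*} [Fintype A] [LinearOrder A] (u w qq : A → ℝ) (s : ℝ)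
    (hs : s ≠ 0) (hsum : ∑ a, u a = s) :
    ∑ a, (u a * ((∑ b, u b * w b) / s * qq a) - u a * w a * qq a)
    = s * ∑ a, ∑ b,
        (if a < b then (u a / s) * (u b / s) * (qq a - qq b) * (w b - w a) else 0) := by
  have hsymm : ∀ a b : A,
      (u a / s) * (u b / s) * (qq a - qq b) * (w b - w a)
      = (u b / s) * (u a / s) * (qq b - qq a) * (w a - w b) := fun a b => by ring
  have hdiag : ∀ a : A,
      (u a / s) * (u a / s) * (qq a - qq a) * (w a - w a) = 0 := fun a => by ring
  rw [sym_half (fun a b => (u a / s) * (u b / s) * (qq a - qq b) * (w b - w a))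
    hsymm hdiag]
  have hdiv : ∀ a b : A, (u a / s) * (u b / s) * (qq a - qq b) * (w b - w a)
      = (u a * u b * (qq a - qq b) * (w b - w a)) / (s * s) := by
    intro a b; field_simp
  simp_rw [hdiv, ← Finset.sum_div]
  rw [expand_sum u w qq, hsum]
  have hL : ∑ a, (u a * ((∑ b, u b * w b) / s * qq a) - u a * w a * qq a)
      = ((∑ b, u b * w b) / s) * (∑ a, u a * qq a) - ∑ a, u a * (w a * qq a) := by
    rw [Finset.sum_sub_distrib, Finset.mul_sum]
    congr 1
    · exact Finset.sum_congr rfl fun a _ => by ring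
    · exact Finset.sum_congr rfl fun a _ => by ring
  rw [hL]
  field_simp

/-- Theorem 1 (bias of MIPS): with universal support of the logging policy,
the bias of MIPS equals a pairwise sum over actions `a < b`. -/
theorem mips_bias
    {X A E : Type*} [Fintype X] [Fintype A] [Fintype E] [LinearOrder A]
    (p : X → ℝ) (πt π₀ : X → A → ℝ) (φ : X → A → E → ℝ) (q : X → A → E → ℝ)
    (hp : ∀ x, 0 ≤ p x) (hp1 : ∑ x, p x = 1)
    (hπt : ∀ x a, 0 ≤ πt x a) (hπt1 : ∀ x, ∑ a, πt x a = 1)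
    (hπ₀pos : ∀ x a, 0 < π₀ x a) (hπ₀1 : ∀ x, ∑ a, π₀ x a = 1)
    (hφ : ∀ x a e, 0 ≤ φ x a e) (hφ1 : ∀ x a, ∑ e, φ x a e = 1) :
    E₀ p π₀ φ (fun x a e => wE πt π₀ φ x e * q x a e) - Vval p πt φ q =
      ∑ x, p x * ∑ e, pE π₀ φ x e *
        ∑ a, ∑ b, (if a < b then
          condπ₀ π₀ φ x a e * condπ₀ π₀ φ x b e *
            (q x a e - q x b e) * (wA πt π₀ x b - wA πt π₀ x a)
          else 0) := by
  unfold E₀ Vval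
  rw [← Finset.sum_sub_distrib]
  refine Finset.sum_congr rfl fun x _ => ?_
  rw [← Finset.sum_sub_distrib]
  have hstep : ∀ a : A,
      ((∑ e, p x * π₀ x a * φ x a e * (wE πt π₀ φ x e * q x a e))
        - ∑ e, p x * πt x a * φ x a e * q x a e)
      = p x * ∑ e, (π₀ x a * φ x a e * (wE πt π₀ φ x e * q x a e)
            - πt x a * φ x a e * q x a e) := by
    intro a
    rw [Finset.mul_sum, ← Finset.sum_sub_distrib]
    exact Finset.sum_congr rfl fun e _ => by ring
  simp_rw [hstep, ← Finset.mul_sum]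
  congr 1
  rw [Finset.sum_comm]
  refine Finset.sum_congr rfl fun e _ => ?_
  by_cases hs : pE π₀ φ x e = 0
  · -- degenerate case: all φ x a e = 0
    have hφ0 : ∀ a : A, φ x a e = 0 := by
      intro a
      have h0 : ∀ a ∈ (Finset.univ : Finset A), 0 ≤ π₀ x a * φ x a e :=
        fun a _ => mul_nonneg (hπ₀pos x a).le (hφ x a e)
      have := (Finset.sum_eq_zero_iff_of_nonneg h0).mp hs a (Finset.mem_univ a)
      exact (mul_eq_zero.mp this).resolve_left (hπ₀pos x a).ne'
    rw [hs]
    simp [hφ0]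
  · -- main case
    have hwE : wE πt π₀ φ x e
        = (∑ b, (π₀ x b * φ x b e) * (πt x b / π₀ x b)) / pE π₀ φ x e := by
      rw [wE]
      congr 1
      simp only [pE]
      refine Finset.sum_congr rfl fun b _ => ?_
      field_simp [(hπ₀pos x b).ne']
    have hkey := key_identity (fun a => π₀ x a * φ x a e)
      (fun a => πt x a / π₀ x a) (fun a => q x a e) (pE π₀ φ x e) hs rfl
    have hL : ∑ a, (π₀ x a * φ x a e * (wE πt π₀ φ x e * q x a e)
          - πt x a * φ x a e * q x a e)
        = ∑ a, ((π₀ x a * φ x a e)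
              * ((∑ b, (π₀ x b * φ x b e) * (πt x b / π₀ x b)) / pE π₀ φ x e * q x a e)
            - (π₀ x a * φ x a e) * (πt x a / π₀ x a) * q x a e) := by
      refine Finset.sum_congr rfl fun a _ => ?_
      rw [hwE]
      congr 1
      field_simp [(hπ₀pos x a).ne']
    rw [hL]
    simp only [condπ₀, wA]
    exact hkey
end

section
/- Suppose the logging policy has universal support (π₀(a|x) > 0 for all x,a) and let n ≥ 1 be a natural number. For a weight function ω : X × A × E → ℝ define the n-sample mean-squared error MSE_n[ω] := (E₀[ω·q] − V(π))² + (1/n)·(E₀[ω²·m₂] − (E₀[ω·q])²). Let B := E₀[w_E·q] − V(π) be the bias of MIPS, where w_A(x,a,e) := w(x,a) and w_E(x,a,e) := w(x,e). Then n·(MSE_n[w_A] − MSE_n[w_E]) = E₀[(w(x,a)² − w(x,e)²)·m₂(x,a,e)] + 2·V(π)·B + (1−n)·B². -/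
open Finset

/-- The `n`-sample mean-squared error of the weighted estimator with weight `ω`:
`MSE_n[ω] = (E₀[ω·q] − V(π))² + (1/n)·(E₀[ω²·m₂] − (E₀[ω·q])²)`. -/
noncomputable def MSEn {X A E : Type*} [Fintype X] [Fintype A] [Fintype E]
    (p : X → ℝ) (πt π₀ : X → A → ℝ) (φ : X → A → E → ℝ)
    (q m₂ : X → A → E → ℝ) (n : ℕ) (ω : X → A → E → ℝ) : ℝ :=
  (E₀ p π₀ φ (fun x a e => ω x a e * q x a e) - Vval p πt φ q) ^ 2 +
    (1 / (n : ℝ)) * (E₀ p π₀ φ (fun x a e => ω x a e ^ 2 * m₂ x a e) -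
      (E₀ p π₀ φ (fun x a e => ω x a e * q x a e)) ^ 2)

/-- Theorem 3 (MSE gain of MIPS): under universal support of the logging policy,
the `n`-sample MSE gain of MIPS over IPS decomposes as stated. -/
theorem mips_mse_gain
    {X A E : Type*} [Fintype X] [Fintype A] [Fintype E]
    (p : X → ℝ) (πt π₀ : X → A → ℝ) (φ : X → A → E → ℝ)
    (q m₂ : X → A → E → ℝ) (n : ℕ) (hn : 1 ≤ n)
    (hp : ∀ x, 0 ≤ p x) (hp1 : ∑ x, p x = 1)
    (hπt : ∀ x a, 0 ≤ πt x a) (hπt1 : ∀ x, ∑ a, πt x a = 1)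
    (hπ₀pos : ∀ x a, 0 < π₀ x a) (hπ₀1 : ∀ x, ∑ a, π₀ x a = 1)
    (hφ : ∀ x a e, 0 ≤ φ x a e) (hφ1 : ∀ x a, ∑ e, φ x a e = 1) :
    (n : ℝ) * (MSEn p πt π₀ φ q m₂ n (fun x a _ => wA πt π₀ x a) -
        MSEn p πt π₀ φ q m₂ n (fun x _ e => wE πt π₀ φ x e)) =
      E₀ p π₀ φ (fun x a e => (wA πt π₀ x a ^ 2 - wE πt π₀ φ x e ^ 2) * m₂ x a e) +
        2 * Vval p πt φ q *
          (E₀ p π₀ φ (fun x a e => wE πt π₀ φ x e * q x a e) - Vval p πt φ q) +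
        (1 - (n : ℝ)) *
          (E₀ p π₀ φ (fun x a e => wE πt π₀ φ x e * q x a e) - Vval p πt φ q) ^ 2 := by
  have hVA : E₀ p π₀ φ (fun x a e => wA πt π₀ x a * q x a e) = Vval p πt φ q := by
    unfold E₀ Vval wA
    refine Finset.sum_congr rfl fun x _ => Finset.sum_congr rfl fun a _ =>
      Finset.sum_congr rfl fun e _ => ?_
    have h := (hπ₀pos x a).ne'
    field_simp
  have hE₀sub : E₀ p π₀ φ (fun x a e => (wA πt π₀ x a ^ 2 - wE πt π₀ φ x e ^ 2) * m₂ x a e)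
      = E₀ p π₀ φ (fun x a e => wA πt π₀ x a ^ 2 * m₂ x a e)
        - E₀ p π₀ φ (fun x a e => wE πt π₀ φ x e ^ 2 * m₂ x a e) := by
    unfold E₀
    rw [← Finset.sum_sub_distrib]
    refine Finset.sum_congr rfl fun x _ => ?_
    rw [← Finset.sum_sub_distrib]
    refine Finset.sum_congr rfl fun a _ => ?_
    rw [← Finset.sum_sub_distrib]
    exact Finset.sum_congr rfl fun e _ => by ring
  have hn' : (n : ℝ) ≠ 0 := by positivity
  unfold MSEn
  rw [hVA, hE₀sub]
  field_simp
  ring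
end

section
/- Suppose full embedding support holds: p(e|x,π) > 0 and p(e|x,π₀) > 0 for all x ∈ X, e ∈ E. Let ŵ : X × E → ℝ be any estimated marginal importance weight, and set δ(x,e) := 1 − ŵ(x,e)/w(x,e) and q(x,π₀,e) := ∑_{a∈A} π₀(a|x,e)·q(x,a,e). Then the bias of MIPS with estimated weights satisfies E₀[ŵ(x,e)·q(x,a,e)] − V(π) = ( E₀[w(x,e)·q(x,a,e)] − V(π) ) − ∑_{x∈X} p(x) ∑_{e∈E} p(e|x,π) · δ(x,e) · q(x,π₀,e). -/
open Finset

/-- Bias of MIPS with estimated marginal importance weights `wHat`: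
it equals the bias of MIPS with true weights minus
`∑_x p(x) ∑_e p(e|x,π)·δ(x,e)·q(x,π₀,e)`, where `δ(x,e) = 1 − wHat(x,e)/w(x,e)`
and `q(x,π₀,e) = ∑_a π₀(a|x,e)·q(x,a,e)`. -/
theorem mips_bias_estimated_weights
    {X A E : Type*} [Fintype X] [Fintype A] [Fintype E]
    (p : X → ℝ) (πt π₀ : X → A → ℝ) (φ : X → A → E → ℝ)
    (q : X → A → E → ℝ) (wHat : X → E → ℝ) (δ : X → E → ℝ) (qπ₀ : X → E → ℝ)
    (hp : ∀ x, 0 ≤ p x) (hp1 : ∑ x, p x = 1)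
    (hπt : ∀ x a, 0 ≤ πt x a) (hπt1 : ∀ x, ∑ a, πt x a = 1)
    (hπ₀ : ∀ x a, 0 ≤ π₀ x a) (hπ₀1 : ∀ x, ∑ a, π₀ x a = 1)
    (hφ : ∀ x a e, 0 ≤ φ x a e) (hφ1 : ∀ x a, ∑ e, φ x a e = 1)
    (hsuppt : ∀ x e, 0 < pE πt φ x e) (hsupp₀ : ∀ x e, 0 < pE π₀ φ x e)
    (hδ : ∀ x e, δ x e = 1 - wHat x e / wE πt π₀ φ x e)
    (hqπ₀ : ∀ x e, qπ₀ x e = ∑ a, condπ₀ π₀ φ x a e * q x a e) :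
    E₀ p π₀ φ (fun x a e => wHat x e * q x a e) - Vval p πt φ q =
      (E₀ p π₀ φ (fun x a e => wE πt π₀ φ x e * q x a e) - Vval p πt φ q) -
        ∑ x, p x * ∑ e, pE πt φ x e * δ x e * qπ₀ x e := by
  have key : ∀ x e, pE πt φ x e * δ x e * qπ₀ x e
      = ∑ a, π₀ x a * φ x a e * (wE πt π₀ φ x e * q x a e)
        - ∑ a, π₀ x a * φ x a e * (wHat x e * q x a e) := by
    intro x e
    have h0 := (hsupp₀ x e).ne'
    have ht := (hsuppt x e).ne'
    rw [hδ, hqπ₀, Finset.mul_sum, ← Finset.sum_sub_distrib]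
    refine Finset.sum_congr rfl fun a _ => ?_
    simp only [condπ₀, wE]
    field_simp
  have hS : ∑ x, p x * ∑ e, pE πt φ x e * δ x e * qπ₀ x e
      = E₀ p π₀ φ (fun x a e => wE πt π₀ φ x e * q x a e)
        - E₀ p π₀ φ (fun x a e => wHat x e * q x a e) := by
    unfold E₀
    rw [← Finset.sum_sub_distrib]
    refine Finset.sum_congr rfl fun x _ => ?_
    rw [Finset.mul_sum]
    rw [show (∑ a, ∑ e, p x * π₀ x a * φ x a e * (wE πt π₀ φ x e * q x a e))
        = ∑ e, ∑ a, p x * π₀ x a * φ x a e * (wE πt π₀ φ x e * q x a e) from Finset.sum_comm,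
      show (∑ a, ∑ e, p x * π₀ x a * φ x a e * (wHat x e * q x a e))
        = ∑ e, ∑ a, p x * π₀ x a * φ x a e * (wHat x e * q x a e) from Finset.sum_comm,
      ← Finset.sum_sub_distrib]
    refine Finset.sum_congr rfl fun e _ => ?_
    rw [key x e, mul_sub, Finset.mul_sum, Finset.mul_sum, ← Finset.sum_sub_distrib,
      ← Finset.sum_sub_distrib]
    refine Finset.sum_congr rfl fun a _ => ?_
    ring
  rw [hS]
  ring
end

section
/- Fix x ∈ X and e ∈ E, and suppose π₀(a|x) > 0 for all a ∈ A and p(e|x,π₀) > 0. Then the marginal importance weight equals the conditional expectation of the vanilla importance weight: w(x,e) = ∑_{a∈A} π₀(a|x,e) · w(x,a). -/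
open Finset

theorem condπ₀_mul_wA {X A E : Type*} [Fintype A]
    (πt π₀ : X → A → ℝ) (φ : X → A → E → ℝ) (x : X) (a : A) (e : E)
    (hπ₀ : π₀ x a ≠ 0) :
    condπ₀ π₀ φ x a e * wA πt π₀ x a = πt x a * φ x a e / pE π₀ φ x e := by
  rw [condπ₀, wA]
  field_simp

theorem marginal_weight_as_conditional_expectation_general
    {X A E : Type*} [Fintype A]
    (πt π₀ : X → A → ℝ) (φ : X → A → E → ℝ)
    (x : X) (e : E)
    (hπ₀pos : ∀ a, 0 < π₀ x a) :
    wE πt π₀ φ x e = ∑ a, condπ₀ π₀ φ x a e * wA πt π₀ x a := by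
  rw [wE, pE, sum_div]
  exact sum_congr rfl fun a _ => (condπ₀_mul_wA πt π₀ φ x a e (hπ₀pos a).ne').symm

/-- The marginal importance weight is the conditional expectation of the
vanilla importance weight: `w(x,e) = ∑_a π₀(a|x,e)·w(x,a)`. -/
theorem marginal_weight_as_conditional_expectation
    {X A E : Type*} [Fintype X] [Fintype A] [Fintype E]
    (πt π₀ : X → A → ℝ) (φ : X → A → E → ℝ)
    (hπt : ∀ x a, 0 ≤ πt x a) (hπt1 : ∀ x, ∑ a, πt x a = 1)
    (hπ₀ : ∀ x a, 0 ≤ π₀ x a) (hπ₀1 : ∀ x, ∑ a, π₀ x a = 1)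
    (hφ : ∀ x a e, 0 ≤ φ x a e) (hφ1 : ∀ x a, ∑ e, φ x a e = 1)
    (x : X) (e : E)
    (hπ₀pos : ∀ a, 0 < π₀ x a) (hpE0 : 0 < pE π₀ φ x e) :
    wE πt π₀ φ x e = ∑ a, condπ₀ π₀ φ x a e * wA πt π₀ x a :=
  marginal_weight_as_conditional_expectation_general πt π₀ φ x e hπ₀pos
end

section
/- Without any support assumption, the bias of the IPS estimator equals ∑_{x∈X} p(x) ∑_{a∈A} π₀(a|x) · w(x,a) · q_A(x,a) − V(π) = − ∑_{x∈X} p(x) ∑_{a ∈ U₀(x)} π(a|x) · q_A(x,a), where U₀(x) := { a ∈ A : π₀(a|x) = 0 } is the set of deficient actions at context x and division by zero is interpreted by the convention c/0 = 0. -/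
open Finset

/-- Action-level expected reward `q_A(x,a) = ∑_e φ(e|x,a)·q(x,a,e)`. -/
noncomputable def qA {X A E : Type*} [Fintype E]
    (φ : X → A → E → ℝ) (q : X → A → E → ℝ) (x : X) (a : A) : ℝ :=
  ∑ e, φ x a e * q x a e

/-
With `c / 0 = 0`, reweighting by `g / f` recovers `g` exactly where `f ≠ 0` and gives `0`
where `f = 0`; the reweighted sum therefore misses precisely the mass of `g` on the zero set
of `f`.
-/

theorem Finset.sum_mul_div_mul_sub_sum_mul {ι 𝕜 : Type*} [Field 𝕜] [DecidableEq 𝕜]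
    (s : Finset ι) (f g h : ι → 𝕜) :
    ∑ i ∈ s, f i * (g i / f i) * h i - ∑ i ∈ s, g i * h i =
      -∑ i ∈ s with f i = 0, g i * h i := by
  rw [← sum_sub_distrib, sum_filter, ← sum_neg_distrib]
  refine sum_congr rfl fun i _ => ?_
  by_cases hf : f i = 0
  · simp [hf]
  · simp [hf, mul_div_cancel₀]

theorem Vval_eq_sum_mul_qA {X A E : Type*} [Fintype X] [Fintype A] [Fintype E]
    (p : X → ℝ) (πt : X → A → ℝ) (φ : X → A → E → ℝ) (q : X → A → E → ℝ) :
    Vval p πt φ q = ∑ x, p x * ∑ a, πt x a * qA φ q x a := by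
  simp only [Vval, qA, mul_sum, mul_assoc]

theorem ips_bias_deficient_support_general
    {X A E : Type*} [Fintype X] [Fintype A] [Fintype E]
    (p : X → ℝ) (πt π₀ : X → A → ℝ) (φ : X → A → E → ℝ) (q : X → A → E → ℝ) :
    (∑ x, p x * ∑ a, π₀ x a * wA πt π₀ x a * qA φ q x a) - Vval p πt φ q =
      - ∑ x, p x * ∑ a ∈ Finset.univ.filter (fun a => π₀ x a = 0),
          πt x a * qA φ q x a := by
  rw [Vval_eq_sum_mul_qA, ← sum_sub_distrib, ← sum_neg_distrib]
  refine sum_congr rfl fun x _ => ?_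
  rw [← mul_sub, ← mul_neg]
  congr 1
  exact sum_mul_div_mul_sub_sum_mul univ (π₀ x) (πt x) (qA φ q x)

/-- Bias of IPS under deficient support (Sachdeva et al. 2020): the bias of IPS
equals minus the value of the target policy on the deficient actions
`U₀(x) = {a : π₀(a|x) = 0}`. -/
theorem ips_bias_deficient_support
    {X A E : Type*} [Fintype X] [Fintype A] [Fintype E]
    (p : X → ℝ) (πt π₀ : X → A → ℝ) (φ : X → A → E → ℝ) (q : X → A → E → ℝ)
    (hp : ∀ x, 0 ≤ p x) (hp1 : ∑ x, p x = 1)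
    (hπt : ∀ x a, 0 ≤ πt x a) (hπt1 : ∀ x, ∑ a, πt x a = 1)
    (hπ₀ : ∀ x a, 0 ≤ π₀ x a) (hπ₀1 : ∀ x, ∑ a, π₀ x a = 1)
    (hφ : ∀ x a e, 0 ≤ φ x a e) (hφ1 : ∀ x a, ∑ e, φ x a e = 1) :
    (∑ x, p x * ∑ a, π₀ x a * wA πt π₀ x a * qA φ q x a) - Vval p πt φ q =
      - ∑ x, p x * ∑ a ∈ Finset.univ.filter (fun a => π₀ x a = 0),
          πt x a * qA φ q x a :=
  ips_bias_deficient_support_general p πt π₀ φ q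
end

section
/- Suppose the logging policy has universal support: π₀(a|x) > 0 for all x ∈ X and a ∈ A. Then the single-sample variance of the IPS estimator decomposes as: ∑_{x,a} p(x)·π₀(a|x)·w(x,a)²·m₂A(x,a) − ( ∑_{x,a} p(x)·π₀(a|x)·w(x,a)·q_A(x,a) )² = ∑_{x,a} p(x)·π₀(a|x)·w(x,a)²·σ²A(x,a) + [ ∑_{x} p(x)·g(x)² − ( ∑_{x} p(x)·g(x) )² ] + ∑_{x} p(x)·[ ∑_{a} π₀(a|x)·(w(x,a)·q_A(x,a))² − g(x)² ], where g(x) := ∑_{a} π₀(a|x)·w(x,a)·q_A(x,a) and σ²A(x,a) := m₂A(x,a) − q_A(x,a)². -/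
open Finset

/-- Action-level conditional second moment `m₂A(x,a) = ∑_e φ(e|x,a)·m₂(x,a,e)`. -/
noncomputable def m2A {X A E : Type*} [Fintype E]
    (φ : X → A → E → ℝ) (m₂ : X → A → E → ℝ) (x : X) (a : A) : ℝ :=
  ∑ e, φ x a e * m₂ x a e

/-!
The decomposition is the law of total variance applied twice. Inside each action the second
moment of the reward splits as `m₂A = σ²A + q_A²`, which separates the reward-noise term from the
second moment `∑ p π₀ (w q_A)²` of the weighted mean reward. That second moment is then split
over contexts into the within-context spread `∑_a π₀ (w q_A)² - g²` and the between-context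
variance of `g`; the mean of the estimator is `∑ p g` by the tower property.
-/

section TotalVariance

variable {ι κ R : Type*} [CommRing R]

theorem sum_mul_sub_sq_sum_mul_eq (s : Finset ι) (p M g : ι → R) :
    ∑ i ∈ s, p i * M i - (∑ i ∈ s, p i * g i) ^ 2 =
      (∑ i ∈ s, p i * g i ^ 2 - (∑ i ∈ s, p i * g i) ^ 2) +
        ∑ i ∈ s, p i * (M i - g i ^ 2) := by
  simp only [mul_sub, sum_sub_distrib]
  ring

theorem sum_mul_sq_mul_eq_sum_mul_sq_mul_sub_add (s : Finset ι) (r w m q : ι → R) :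
    ∑ i ∈ s, r i * w i ^ 2 * m i =
      ∑ i ∈ s, r i * w i ^ 2 * (m i - q i ^ 2) + ∑ i ∈ s, r i * (w i * q i) ^ 2 := by
  rw [← sum_add_distrib]
  exact sum_congr rfl fun i _ ↦ by ring

theorem sum_sum_mul_eq_sum_mul_sum (s : Finset ι) (t : Finset κ) (p : ι → R) (f : ι → κ → R) :
    ∑ i ∈ s, ∑ j ∈ t, p i * f i j = ∑ i ∈ s, p i * ∑ j ∈ t, f i j :=
  sum_congr rfl fun i _ ↦ (mul_sum t (f i) (p i)).symm

end TotalVariance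

theorem ips_variance_decomposition_general
    {X A E : Type*} [Fintype X] [Fintype A] [Fintype E]
    (p : X → ℝ) (πt π₀ : X → A → ℝ) (φ : X → A → E → ℝ)
    (q m₂ : X → A → E → ℝ) (g : X → ℝ) (σ2A : X → A → ℝ)
    (hg : ∀ x, g x = ∑ a, π₀ x a * wA πt π₀ x a * qA φ q x a)
    (hσ : ∀ x a, σ2A x a = m2A φ m₂ x a - qA φ q x a ^ 2) :
    (∑ x, ∑ a, p x * π₀ x a * wA πt π₀ x a ^ 2 * m2A φ m₂ x a) -
        (∑ x, ∑ a, p x * π₀ x a * wA πt π₀ x a * qA φ q x a) ^ 2 =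
      (∑ x, ∑ a, p x * π₀ x a * wA πt π₀ x a ^ 2 * σ2A x a) +
        ((∑ x, p x * g x ^ 2) - (∑ x, p x * g x) ^ 2) +
        (∑ x, p x * ((∑ a, π₀ x a * (wA πt π₀ x a * qA φ q x a) ^ 2) - g x ^ 2)) := by
  obtain rfl : g = fun x ↦ ∑ a, π₀ x a * wA πt π₀ x a * qA φ q x a := funext hg
  obtain rfl : σ2A = fun x a ↦ m2A φ m₂ x a - qA φ q x a ^ 2 := funext fun x ↦ funext (hσ x)
  have mean : ∑ x, ∑ a, p x * π₀ x a * wA πt π₀ x a * qA φ q x a =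
      ∑ x, p x * ∑ a, π₀ x a * wA πt π₀ x a * qA φ q x a := by
    simp only [mul_assoc, sum_sum_mul_eq_sum_mul_sum]
  have noise : ∀ x, ∑ a, p x * π₀ x a * wA πt π₀ x a ^ 2 * m2A φ m₂ x a =
      ∑ a, p x * π₀ x a * wA πt π₀ x a ^ 2 * (m2A φ m₂ x a - qA φ q x a ^ 2) +
        p x * ∑ a, π₀ x a * (wA πt π₀ x a * qA φ q x a) ^ 2 := fun x ↦ by
    rw [sum_mul_sq_mul_eq_sum_mul_sq_mul_sub_add _ _ _ _ (qA φ q x), mul_sum]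
    simp only [mul_assoc]
  rw [mean, sum_congr rfl fun x _ ↦ noise x, sum_add_distrib, add_sub_assoc,
    sum_mul_sub_sq_sum_mul_eq, add_assoc]

/-- Variance decomposition of the single-sample IPS estimator under universal
support into the reward-noise term, the context-variance term, and the
action-level weighting penalty term. -/
theorem ips_variance_decomposition
    {X A E : Type*} [Fintype X] [Fintype A] [Fintype E]
    (p : X → ℝ) (πt π₀ : X → A → ℝ) (φ : X → A → E → ℝ)
    (q m₂ : X → A → E → ℝ) (g : X → ℝ) (σ2A : X → A → ℝ)
    (hp : ∀ x, 0 ≤ p x) (hp1 : ∑ x, p x = 1)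
    (hπt : ∀ x a, 0 ≤ πt x a) (hπt1 : ∀ x, ∑ a, πt x a = 1)
    (hπ₀pos : ∀ x a, 0 < π₀ x a) (hπ₀1 : ∀ x, ∑ a, π₀ x a = 1)
    (hφ : ∀ x a e, 0 ≤ φ x a e) (hφ1 : ∀ x a, ∑ e, φ x a e = 1)
    (hg : ∀ x, g x = ∑ a, π₀ x a * wA πt π₀ x a * qA φ q x a)
    (hσ : ∀ x a, σ2A x a = m2A φ m₂ x a - qA φ q x a ^ 2) :
    (∑ x, ∑ a, p x * π₀ x a * wA πt π₀ x a ^ 2 * m2A φ m₂ x a) -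
        (∑ x, ∑ a, p x * π₀ x a * wA πt π₀ x a * qA φ q x a) ^ 2 =
      (∑ x, ∑ a, p x * π₀ x a * wA πt π₀ x a ^ 2 * σ2A x a) +
        ((∑ x, p x * g x ^ 2) - (∑ x, p x * g x) ^ 2) +
        (∑ x, p x * ((∑ a, π₀ x a * (wA πt π₀ x a * qA φ q x a) ^ 2) - g x ^ 2)) :=
  ips_variance_decomposition_general p πt π₀ φ q m₂ g σ2A hg hσ
end
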